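/- arXiv:0912.0448 — 2 statements merged into one kernel-verified Lean document; each statement's English description precedes it below -/
import Mathlib

section
/- (Berlekamp's rule is a homomorphism to Z_(2)) The value assigned to a hackenbush string (a finite word over {blue, red}) — where counters below the first color change get weight 1, subsequent counters get weights 1/2, 1/4, ..., blue counters count positively and red negatively — extends additively to a monoid homomorphism from the free commutative monoid on strings to the additive group Z_(2) of dyadic rationals, and this homomorphism is surjective; moreover each dyadic rational is the value of exactly one single string. -/
/-- Auxiliary computation of Berlekamp's rule. The arguments are: whether a
color change has already occurred below, the color of the previous counter, the
weight of the previous counter, and the remaining counters (bottom to top,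
`true` = blue, `false` = red). A counter with no opposite color below it has
weight 1; any later counter has half the weight of the counter below it. -/
def bvalAux : Bool → Bool → ℚ → List Bool → ℚ
  | _, _, _, [] => 0
  | changed, prev, w, b :: t =>
      let changed' := changed || (b != prev)
      let w' := if changed' then w / 2 else 1
      (if b then w' else -w') + bvalAux changed' b w' t

/-- Berlekamp's value of a hackenbush string: the sum of the weights of the
blue counters minus the sum of the weights of the red counters. -/
def bval : List Bool → ℚ
  | [] => 0
  | b :: t => (if b then 1 else -1) + bvalAux false b 1 t

/-- The value of a position (a formal sum of hackenbush strings). -/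
def bvalPos (s : Multiset (List Bool)) : ℚ := (s.map bval).sum

/-! A nonempty string is a bottom block of `n + 1` counters of one colour followed by a tail `s`
that is empty or starts with the other colour. For a blue block the value is `n + 1 + fracVal s`,
where `fracVal s ∈ (-1, 0]` is a signed binary expansion with digits `±1`; swapping the colours
negates the value. Such expansions represent each dyadic rational of `(-1, 1)` exactly once, the
first digit being read off the sign, so the ceiling of the value recovers `n` and its difference
with `n + 1` recovers `s`. -/

/-- The value of a string stacked directly on a colour change: its weights are `1/2, 1/4, …`
whatever the colour of the counter below. -/
def fracVal (t : List Bool) : ℚ := bvalAux true false 1 t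

theorem bvalAux_true (t : List Bool) (p : Bool) (w : ℚ) :
    bvalAux true p w t = w * fracVal t := by
  induction t generalizing p w with
  | nil => simp [bvalAux, fracVal]
  | cons b t ih =>
    rw [fracVal]
    simp only [bvalAux, Bool.true_or, if_true, ih]
    cases b <;> simp only [Bool.false_eq_true, ↓reduceIte] <;> ring

@[simp] theorem fracVal_nil : fracVal [] = 0 := rfl

@[simp] theorem fracVal_cons_true (t : List Bool) : fracVal (true :: t) = (1 + fracVal t) / 2 := by
  rw [fracVal, bvalAux]
  simp only [↓reduceIte, Bool.bne_false, Bool.or_self, one_div, bvalAux_true]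
  ring

@[simp] theorem fracVal_cons_false (t : List Bool) :
    fracVal (false :: t) = (fracVal t - 1) / 2 := by
  rw [fracVal, bvalAux]
  simp only [Bool.false_eq_true, ↓reduceIte, bne_self_eq_false, Bool.or_false, one_div,
    bvalAux_true]
  ring

theorem abs_fracVal_lt_one (t : List Bool) : |fracVal t| < 1 := by
  induction t with
  | nil => simp
  | cons b t ih =>
    rw [abs_lt] at ih ⊢
    cases b <;> simp only [fracVal_cons_true, fracVal_cons_false] <;> constructor <;> linarith

theorem fracVal_cons_true_pos (t : List Bool) : 0 < fracVal (true :: t) := by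
  have := (abs_lt.mp (abs_fracVal_lt_one t)).1
  rw [fracVal_cons_true]
  linarith

theorem fracVal_cons_false_neg (t : List Bool) : fracVal (false :: t) < 0 := by
  have := (abs_lt.mp (abs_fracVal_lt_one t)).2
  rw [fracVal_cons_false]
  linarith

theorem fracVal_nonpos_iff {t : List Bool} : fracVal t ≤ 0 ↔ t.head? ≠ some true := by
  rcases t with _ | ⟨_ | _, t⟩
  · simp
  · simpa using (fracVal_cons_false_neg t).le
  · simpa using fracVal_cons_true_pos t

theorem head?_eq_ite_fracVal (t : List Bool) :
    t.head? = if 0 < fracVal t then some true else if fracVal t < 0 then some false else none := by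
  rcases t with _ | ⟨_ | _, t⟩
  · simp
  · rw [if_neg (fracVal_cons_false_neg t).not_gt, if_pos (fracVal_cons_false_neg t)]; rfl
  · rw [if_pos (fracVal_cons_true_pos t)]; rfl

theorem head?_eq_of_fracVal_eq {t₁ t₂ : List Bool} (h : fracVal t₁ = fracVal t₂) :
    t₁.head? = t₂.head? := by
  rw [head?_eq_ite_fracVal, h, ← head?_eq_ite_fracVal]

theorem fracVal_injective : Function.Injective fracVal := by
  intro t₁
  induction t₁ with
  | nil => exact fun t₂ h ↦ (List.head?_eq_none_iff.mp (head?_eq_of_fracVal_eq h).symm).symm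
  | cons b t₁ ih =>
    intro t₂ h
    obtain ⟨t₂, rfl⟩ := List.head?_eq_some_iff.mp (head?_eq_of_fracVal_eq h).symm
    cases b <;> simp only [fracVal_cons_true, fracVal_cons_false] at h <;> rw [ih (by linarith)]

theorem exists_int_fracVal_eq_div (t : List Bool) : ∃ a : ℤ, fracVal t = a / 2 ^ t.length := by
  induction t with
  | nil => exact ⟨0, by simp⟩
  | cons b t ih =>
    obtain ⟨a, ha⟩ := ih
    refine ⟨(if b then 1 else -1) * 2 ^ t.length + a, ?_⟩
    cases b <;> simp only [fracVal_cons_true, fracVal_cons_false, ha, List.length_cons] <;>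
      push_cast <;> field_simp <;> ring

theorem exists_fracVal_eq_div (k : ℕ) (a : ℤ) (ha : |a| < 2 ^ k) :
    ∃ t : List Bool, fracVal t = a / 2 ^ k := by
  induction k generalizing a with
  | zero => exact ⟨[], by simp_all [Int.abs_lt_one_iff]⟩
  | succ k ih =>
    rcases lt_trichotomy a 0 with ha₀ | rfl | ha₀
    · obtain ⟨t, ht⟩ := ih (a + 2 ^ k) (by
        rw [abs_lt] at ha ⊢
        constructor <;> linarith [pow_succ (2 : ℤ) k])
      refine ⟨false :: t, ?_⟩
      rw [fracVal_cons_false, ht]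
      push_cast
      field_simp
      ring
    · exact ⟨[], by simp⟩
    · obtain ⟨t, ht⟩ := ih (a - 2 ^ k) (by
        rw [abs_lt] at ha ⊢
        constructor <;> linarith [pow_succ (2 : ℤ) k])
      refine ⟨true :: t, ?_⟩
      rw [fracVal_cons_true, ht]
      push_cast
      field_simp
      ring

theorem bvalAux_map_not (t : List Bool) (c p : Bool) (w : ℚ) :
    bvalAux c (!p) w (t.map not) = -bvalAux c p w t := by
  induction t generalizing c p w with
  | nil => simp [bvalAux]
  | cons b t ih =>
    have hne : ((!b) != (!p)) = (b != p) := by cases b <;> cases p <;> rfl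
    simp only [List.map_cons, bvalAux, hne, ih]
    cases b <;> simp only [Bool.not_true, Bool.not_false, Bool.false_eq_true, ↓reduceIte] <;> ring

theorem bval_map_not (l : List Bool) : bval (l.map not) = -bval l := by
  rcases l with _ | ⟨b, t⟩
  · simp [bval]
  · have := bvalAux_map_not t false b 1
    cases b <;> simp only [List.map_cons, bval, Bool.not_true, Bool.not_false, Bool.false_eq_true,
      ↓reduceIte] at this ⊢ <;> rw [this] <;> ring

theorem bval_cons_true_true (t : List Bool) : bval (true :: true :: t) = 1 + bval (true :: t) := by
  simp [bval, bvalAux]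

theorem bval_cons_true_of_head? {t : List Bool} (ht : t.head? ≠ some true) :
    bval (true :: t) = 1 + fracVal t := by
  rcases t with _ | ⟨_ | _, t⟩
  · simp [bval, bvalAux]
  · simp only [bval, bvalAux, ↓reduceIte, Bool.false_eq_true, Bool.bne_true, Bool.not_false,
      Bool.or_true, bvalAux_true, fracVal_cons_false]
    ring
  · simp at ht

theorem bval_replicate_append {s : List Bool} (hs : s.head? ≠ some true) (n : ℕ) :
    bval (List.replicate (n + 1) true ++ s) = n + 1 + fracVal s := by
  induction n with
  | zero => simpa using bval_cons_true_of_head? hs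
  | succ n ih =>
    rw [List.replicate_succ, List.cons_append, List.replicate_succ, List.cons_append,
      bval_cons_true_true, ← List.cons_append, ← List.replicate_succ, ih]
    push_cast
    ring

theorem exists_replicate_append (t : List Bool) :
    ∃ n s, s.head? ≠ some true ∧ true :: t = List.replicate (n + 1) true ++ s := by
  induction t with
  | nil => exact ⟨0, [], by simp⟩
  | cons b t ih =>
    cases b with
    | false => exact ⟨0, false :: t, by simp⟩
    | true =>
      obtain ⟨n, s, hs, ht⟩ := ih
      exact ⟨n + 1, s, hs, by rw [ht, List.replicate_succ (n := n + 1), List.cons_append]⟩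

theorem ceil_bval_replicate_append {s : List Bool} (hs : s.head? ≠ some true) (n : ℕ) :
    ⌈bval (List.replicate (n + 1) true ++ s)⌉ = n + 1 := by
  have h₀ := fracVal_nonpos_iff.mpr hs
  have h₁ := (abs_lt.mp (abs_fracVal_lt_one s)).1
  rw [Int.ceil_eq_iff, bval_replicate_append hs]
  push_cast
  constructor <;> linarith

theorem bval_cons_true_pos (t : List Bool) : 0 < bval (true :: t) := by
  obtain ⟨n, s, hs, ht⟩ := exists_replicate_append t
  rw [ht, ← Int.ceil_pos, ceil_bval_replicate_append hs]
  positivity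

theorem bval_cons_false (t : List Bool) : bval (false :: t) = -bval (true :: t.map not) := by
  simpa using congrArg Neg.neg (bval_map_not (false :: t)).symm

theorem bval_cons_false_neg (t : List Bool) : bval (false :: t) < 0 := by
  simpa [bval_cons_false] using bval_cons_true_pos (t.map not)

theorem head?_eq_ite_bval (l : List Bool) :
    l.head? = if 0 < bval l then some true else if bval l < 0 then some false else none := by
  rcases l with _ | ⟨_ | _, t⟩
  · simp [bval]
  · rw [if_neg (bval_cons_false_neg t).not_gt, if_pos (bval_cons_false_neg t)]; rfl
  · rw [if_pos (bval_cons_true_pos t)]; rfl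

theorem head?_eq_of_bval_eq {l₁ l₂ : List Bool} (h : bval l₁ = bval l₂) :
    l₁.head? = l₂.head? := by
  rw [head?_eq_ite_bval, h, ← head?_eq_ite_bval]

theorem bval_cons_true_injective {t₁ t₂ : List Bool}
    (h : bval (true :: t₁) = bval (true :: t₂)) : t₁ = t₂ := by
  obtain ⟨n₁, s₁, hs₁, ht₁⟩ := exists_replicate_append t₁
  obtain ⟨n₂, s₂, hs₂, ht₂⟩ := exists_replicate_append t₂
  rw [ht₁, ht₂] at h
  have hn : n₁ = n₂ := by
    have := congrArg Int.ceil h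
    rw [ceil_bval_replicate_append hs₁, ceil_bval_replicate_append hs₂] at this
    omega
  subst hn
  rw [bval_replicate_append hs₁, bval_replicate_append hs₂, add_right_inj] at h
  simpa [fracVal_injective h, ← ht₂] using ht₁

theorem bval_injective : Function.Injective bval := by
  intro l₁ l₂ h
  have hhead := head?_eq_of_bval_eq h
  rcases l₁ with _ | ⟨_ | _, t₁⟩
  · exact (List.head?_eq_none_iff.mp hhead.symm).symm
  · obtain ⟨t₂, rfl⟩ := List.head?_eq_some_iff.mp hhead.symm
    rw [bval_cons_false, bval_cons_false, neg_inj] at h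
    rw [List.map_injective_iff.mpr Bool.not_injective (bval_cons_true_injective h)]
  · obtain ⟨t₂, rfl⟩ := List.head?_eq_some_iff.mp hhead.symm
    rw [bval_cons_true_injective h]

theorem exists_int_bval_eq_div (l : List Bool) : ∃ a : ℤ, ∃ k : ℕ, bval l = a / 2 ^ k := by
  suffices h : ∀ t, ∃ a : ℤ, ∃ k : ℕ, bval (true :: t) = a / 2 ^ k by
    rcases l with _ | ⟨_ | _, t⟩
    · exact ⟨0, 0, by simp [bval]⟩
    · obtain ⟨a, k, h⟩ := h (t.map not)
      exact ⟨-a, k, by rw [bval_cons_false, h]; push_cast; ring⟩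
    · exact h t
  intro t
  obtain ⟨n, s, hs, ht⟩ := exists_replicate_append t
  obtain ⟨a, ha⟩ := exists_int_fracVal_eq_div s
  refine ⟨(n + 1) * 2 ^ s.length + a, s.length, ?_⟩
  rw [ht, bval_replicate_append hs, ha]
  push_cast
  field_simp

theorem exists_bval_eq_div_of_pos (k : ℕ) {a : ℤ} (ha : 0 < a) :
    ∃ l : List Bool, bval l = a / 2 ^ k := by
  set x : ℚ := a / 2 ^ k
  have hpow : (0 : ℚ) < 2 ^ k := by positivity
  obtain ⟨n, hn⟩ : ∃ n : ℕ, ⌈x⌉ = n + 1 :=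
    ⟨(⌈x⌉ - 1).toNat, by have : 0 < ⌈x⌉ := Int.ceil_pos.mpr (by positivity); omega⟩
  set b : ℤ := a - ⌈x⌉ * 2 ^ k
  have hbx : (b : ℚ) / 2 ^ k = x - ⌈x⌉ := by simp only [b, x]; push_cast; field_simp
  have hb : |b| < 2 ^ k := by
    have : |(b : ℚ) / 2 ^ k| < 1 := by
      rw [hbx, abs_lt]
      constructor <;> linarith [Int.ceil_lt_add_one x, Int.le_ceil x]
    rw [abs_div, abs_of_pos hpow, div_lt_one hpow] at this
    exact_mod_cast this
  obtain ⟨s, hs⟩ := exists_fracVal_eq_div k b hb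
  have hs' : s.head? ≠ some true :=
    fracVal_nonpos_iff.mp (by rw [hs, hbx]; linarith [Int.le_ceil x])
  refine ⟨List.replicate (n + 1) true ++ s, ?_⟩
  rw [bval_replicate_append hs', hs, hbx, hn]
  push_cast
  ring

theorem exists_bval_eq_div (a : ℤ) (k : ℕ) : ∃ l : List Bool, bval l = a / 2 ^ k := by
  rcases lt_trichotomy a 0 with ha | rfl | ha
  · obtain ⟨l, hl⟩ := exists_bval_eq_div_of_pos k (neg_pos.mpr ha)
    exact ⟨l.map not, by rw [bval_map_not, hl]; push_cast; ring⟩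
  · exact ⟨[], by simp [bval]⟩
  · exact exists_bval_eq_div_of_pos k ha

/-- Berlekamp's rule is a homomorphism onto `ℤ_(2)`: the value extends
additively to a monoid homomorphism from the free commutative monoid on
strings to the additive group of dyadic rationals; it is surjective onto the
dyadic rationals, and each dyadic rational is the value of exactly one single
string. -/
theorem stmt11 :
    (∀ s t : Multiset (List Bool), bvalPos (s + t) = bvalPos s + bvalPos t) ∧
    (∀ l : List Bool, ∃ a : ℤ, ∃ k : ℕ, bval l = (a : ℚ) / 2 ^ k) ∧
    (∀ a : ℤ, ∀ k : ℕ, ∃! l : List Bool, bval l = (a : ℚ) / 2 ^ k) := by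
  refine ⟨fun s t ↦ ?_, exists_int_bval_eq_div, fun a k ↦ ?_⟩
  · rw [bvalPos, Multiset.map_add, Multiset.sum_add]
    rfl
  · obtain ⟨l, hl⟩ := exists_bval_eq_div a k
    exact ⟨l, hl, fun l' hl' ↦ bval_injective (hl'.trans hl.symm)⟩
end

section
/- (Solution of single-suit five-card) In a single-suit symmetric deal, define the trace as the sum over i of +1 if West's i-th highest card beats East's i-th highest card and −1 otherwise. Then West wins (the last trick) if the trace is positive, East wins if it is negative, and the player on lead wins if the trace is zero. -/
/-- The trace of a single-suit symmetric deal: listing both hands in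
decreasing order, compare the `i`-th highest cards and count `+1` when West's
card is higher and `-1` when East's card is higher. -/
def trace (W E : Finset ℕ) : ℤ :=
  (((W.sort (· ≥ ·)).zip (E.sort (· ≥ ·))).map
    (fun p => if p.2 < p.1 then (1 : ℤ) else -1)).sum

/-- `WestWins W E lead` : West wins the last trick in single-suit five-card
from the position where West holds `W`, East holds `E`, and West is on lead iff
`lead = true`. The player on lead plays any card; the opponent must beat it if
possible (the greedy rule) and otherwise plays any card; the higher card wins
the trick and its owner gets the lead; the winner of the last trick wins.
When the hands are empty, the player holding the lead won the last trick.
(East's choices are universally quantified; West's responses to East's leads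
are given by a strategy function `resp`.) -/
inductive WestWins : Finset ℕ → Finset ℕ → Bool → Prop
  | last : WestWins ∅ ∅ true
  | westLeads (W E : Finset ℕ) (w : ℕ) (hw : w ∈ W) :
      (∀ e ∈ E, ((∃ x ∈ E, w < x) → w < e) →
        WestWins (W.erase w) (E.erase e) (decide (e < w))) →
      WestWins W E true
  | eastLeads (W E : Finset ℕ) (hE : E.Nonempty) (resp : ℕ → ℕ)
      (hmem : ∀ e ∈ E, resp e ∈ W)
      (hgreedy : ∀ e ∈ E, (∃ x ∈ W, e < x) → e < resp e) :
      (∀ e ∈ E, WestWins (W.erase (resp e)) (E.erase e) (decide (e < resp e))) →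
      WestWins W E false

/-!
Call a West card *winning* when fewer East cards than West cards lie above it. In a symmetric
deal the trace is the number of winning West cards minus the number of losing ones.

Removing a West card `r` and an East card `e` only changes the status of West cards strictly
between them, and a card `w` with `r < w < e` can only turn from losing to winning. So if West
answers East's lead with the cheapest card that beats it, the trace drops by at most one, and
if no West card beats the lead, giving up the lowest card raises the trace by at least one.
A West player on lead with nonnegative trace has a lead that leaves a trace `≥ 1` when East
takes the trick and `≥ 0` when West does. Since `trace E W = -trace W E`, the same holds for
East, and induction on the size of the hands gives the theorem.
-/

open Finset

namespace FiveCard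

structure IsSymmetricDeal (W E : Finset ℕ) : Prop where
  disjoint : Disjoint W E
  card_eq : #W = #E

variable {W E : Finset ℕ} {r e w : ℕ}

namespace IsSymmetricDeal

lemma symm (hD : IsSymmetricDeal W E) : IsSymmetricDeal E W :=
  ⟨hD.disjoint.symm, hD.card_eq.symm⟩

lemma erase (hD : IsSymmetricDeal W E) (hr : r ∈ W) (he : e ∈ E) :
    IsSymmetricDeal (W.erase r) (E.erase e) :=
  ⟨hD.disjoint.mono (erase_subset _ _) (erase_subset _ _), by
    rw [card_erase_of_mem hr, card_erase_of_mem he, hD.card_eq]⟩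

lemma nonempty_iff (hD : IsSymmetricDeal W E) : W.Nonempty ↔ E.Nonempty := by
  rw [← card_pos, ← card_pos, hD.card_eq]

lemma eq_empty (hD : IsSymmetricDeal ∅ E) : E = ∅ :=
  card_eq_zero.1 hD.card_eq.symm

lemma ne (hD : IsSymmetricDeal W E) (hw : w ∈ W) (he : e ∈ E) : w ≠ e :=
  fun h => disjoint_left.1 hD.disjoint hw (h ▸ he)

end IsSymmetricDeal

lemma sort_ge_eq_max'_cons {S : Finset ℕ} (h : S.Nonempty) :
    S.sort (· ≥ ·) = S.max' h :: (S.erase (S.max' h)).sort (· ≥ ·) := by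
  conv_lhs => rw [← insert_erase (S.max'_mem h)]
  exact sort_insert _ (fun b hb => S.le_max' b (mem_of_mem_erase hb)) (notMem_erase _ _)

@[simp] lemma trace_empty_empty : trace ∅ ∅ = 0 := by
  simp [trace]

lemma trace_eq_add_trace_erase_max' (hW : W.Nonempty) (hE : E.Nonempty) :
    trace W E = (if E.max' hE < W.max' hW then 1 else -1)
      + trace (W.erase (W.max' hW)) (E.erase (E.max' hE)) := by
  simp only [trace, sort_ge_eq_max'_cons hW, sort_ge_eq_max'_cons hE, List.zip_cons_cons,
    List.map_cons, List.sum_cons]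

lemma IsSymmetricDeal.trace_swap (hD : IsSymmetricDeal W E) : trace E W = -trace W E := by
  induction W using Finset.strongInduction generalizing E with
  | H W ih =>
    rcases W.eq_empty_or_nonempty with rfl | hW
    · simp [hD.eq_empty]
    · have hE := hD.nonempty_iff.1 hW
      have hne := hD.ne (W.max'_mem hW) (E.max'_mem hE)
      rw [trace_eq_add_trace_erase_max' hW hE, trace_eq_add_trace_erase_max' hE hW,
        ih _ (erase_ssubset (W.max'_mem hW)) (hD.erase (W.max'_mem hW) (E.max'_mem hE))]
      split_ifs <;> omega

/-- West's card `w` contributes `pairSign W E w` to the trace: if `w` is West's `i`-th highest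
card, then East's `i`-th highest card lies below `w` exactly when fewer than `i` East cards lie
above `w`. -/
def pairSign (W E : Finset ℕ) (w : ℕ) : ℤ :=
  if #{e ∈ E | w < e} ≤ #{x ∈ W | w < x} then 1 else -1

lemma pairSign_eq_one_iff : pairSign W E w = 1 ↔ #{e ∈ E | w < e} ≤ #{x ∈ W | w < x} := by
  unfold pairSign; split_ifs <;> simp_all

lemma pairSign_eq_neg_one_iff :
    pairSign W E w = -1 ↔ #{x ∈ W | w < x} < #{e ∈ E | w < e} := by
  unfold pairSign; split_ifs <;> simp_all

lemma pairSign_eq_one_or_eq_neg_one (W E : Finset ℕ) (w : ℕ) :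
    pairSign W E w = 1 ∨ pairSign W E w = -1 := by
  unfold pairSign; split_ifs
  exacts [Or.inl rfl, Or.inr rfl]

lemma pairSign_eq_one_of_forall_lt (h : ∀ e ∈ E, e < w) : pairSign W E w = 1 := by
  rw [pairSign_eq_one_iff, filter_false_of_mem fun e he => not_lt.2 (h e he).le, card_empty]
  exact Nat.zero_le _

lemma card_filter_lt_erase_add_one {S : Finset ℕ} (hr : r ∈ S) (hw : w < r) :
    #{x ∈ S.erase r | w < x} + 1 = #{x ∈ S | w < x} := by
  rw [filter_erase, card_erase_add_one (mem_filter.2 ⟨hr, hw⟩)]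

lemma card_filter_lt_erase_of_le {S : Finset ℕ} (hw : r ≤ w) :
    #{x ∈ S.erase r | w < x} = #{x ∈ S | w < x} := by
  rw [filter_erase, erase_eq_of_notMem (by simp; omega)]

lemma pairSign_erase_of_lt_of_lt (hr : r ∈ W) (he : e ∈ E) (hwr : w < r) (hwe : w < e) :
    pairSign (W.erase r) (E.erase e) w = pairSign W E w := by
  have := card_filter_lt_erase_add_one hr hwr
  have := card_filter_lt_erase_add_one he hwe
  unfold pairSign
  split_ifs <;> omega

lemma pairSign_le_pairSign_erase (hr : r ∈ W) (he : e ∈ E) (h : w < r → w < e) :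
    pairSign W E w ≤ pairSign (W.erase r) (E.erase e) w := by
  rcases lt_or_ge w r with hwr | hrw
  · exact (pairSign_erase_of_lt_of_lt hr he hwr (h hwr)).ge
  · have := card_filter_lt_erase_of_le (S := W) hrw
    have : #{x ∈ E.erase e | w < x} ≤ #{x ∈ E | w < x} :=
      card_le_card (filter_subset_filter _ (erase_subset e E))
    unfold pairSign
    split_ifs <;> omega

lemma pairSign_add_two_le_pairSign_erase (he : e ∈ E) (hrw : r ≤ w) (hwe : w < e)
    (hflip : #{x ∈ E | w < x} = #{x ∈ W | w < x} + 1) :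
    pairSign W E w + 2 ≤ pairSign (W.erase r) (E.erase e) w := by
  have := card_filter_lt_erase_of_le (S := W) hrw
  have := card_filter_lt_erase_add_one he hwe
  unfold pairSign
  split_ifs <;> omega

lemma IsSymmetricDeal.trace_eq_sum_pairSign (hD : IsSymmetricDeal W E) :
    trace W E = ∑ w ∈ W, pairSign W E w := by
  induction W using Finset.strongInduction generalizing E with
  | H W ih =>
    rcases W.eq_empty_or_nonempty with rfl | hW
    · simp [hD.eq_empty]
    · have hE := hD.nonempty_iff.1 hW
      set m := W.max' hW
      set m' := E.max' hE
      have hm : m ∈ W := W.max'_mem hW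
      have hm' : m' ∈ E := E.max'_mem hE
      rw [trace_eq_add_trace_erase_max' hW hE, ih _ (erase_ssubset hm) (hD.erase hm hm'),
        ← add_sum_erase W _ hm]
      congr 1
      · symm
        split_ifs with h
        · exact pairSign_eq_one_of_forall_lt fun e he => (E.le_max' e he).trans_lt h
        · have hlt : m < m' := lt_of_le_of_ne (not_lt.1 h) (hD.ne hm hm')
          rw [pairSign_eq_neg_one_iff, filter_false_of_mem fun x hx => not_lt.2 (W.le_max' x hx),
            card_empty, card_pos]
          exact ⟨m', mem_filter.2 ⟨hm', hlt⟩⟩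
      · refine sum_congr rfl fun w hw => ?_
        have hwm : w < m := lt_of_le_of_ne (W.le_max' w (mem_of_mem_erase hw)) (ne_of_mem_erase hw)
        rcases lt_or_gt_of_ne (hD.ne (mem_of_mem_erase hw) hm') with hwm' | hwm'
        · exact pairSign_erase_of_lt_of_lt hm hm' hwm hwm'
        · have h : ∀ e ∈ E, e < w := fun e he => (E.le_max' e he).trans_lt hwm'
          rw [pairSign_eq_one_of_forall_lt h,
            pairSign_eq_one_of_forall_lt fun e he => h e (mem_of_mem_erase he)]

lemma card_filter_lt_of_consecutive {a c : ℕ} (ha : a ∈ W) (hca : c < a)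
    (hnext : ∀ x ∈ W, c < x → a ≤ x) (hc : pairSign W E c = 1) (ha' : pairSign W E a = -1) :
    #{x ∈ E | a < x} = #{x ∈ W | a < x} + 1 ∧ #{x ∈ E | c < x} = #{x ∈ E | a < x} := by
  have hW : {x ∈ W | c < x} = insert a {x ∈ W | a < x} := by
    ext x
    simp only [mem_filter, mem_insert]
    constructor
    · rintro ⟨hx, hcx⟩
      rcases (hnext x hx hcx).eq_or_lt with h | h
      · exact Or.inl h.symm
      · exact Or.inr ⟨hx, h⟩
    · rintro (rfl | ⟨hx, hax⟩)
      · exact ⟨ha, hca⟩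
      · exact ⟨hx, hca.trans hax⟩
  have hWcard : #{x ∈ W | c < x} = #{x ∈ W | a < x} + 1 := by
    rw [hW, card_insert_of_notMem (by simp)]
  have hE : #{x ∈ E | a < x} ≤ #{x ∈ E | c < x} :=
    card_le_card (monotone_filter_right E fun _ _ hx => hca.trans hx)
  rw [pairSign_eq_one_iff] at hc
  rw [pairSign_eq_neg_one_iff] at ha'
  omega

lemma exists_flip_above (hr : r ∈ W) (hwin : pairSign W E r = 1) (he : e ∈ E)
    (hall : ∀ x ∈ W, x < e) :
    ∃ a ∈ W, r < a ∧ #{x ∈ E | a < x} = #{x ∈ W | a < x} + 1 := by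
  obtain ⟨c, hcS, hcmax⟩ := exists_max_image {w ∈ W | pairSign W E w = 1} id
    ⟨r, mem_filter.2 ⟨hr, hwin⟩⟩
  obtain ⟨hcW, hc⟩ := mem_filter.1 hcS
  have hU : {x ∈ W | c < x}.Nonempty := by
    rw [nonempty_iff_ne_empty]
    intro hU
    have : 0 < #{x ∈ E | c < x} := card_pos.2 ⟨e, mem_filter.2 ⟨he, hall c hcW⟩⟩
    rw [pairSign_eq_one_iff, hU, card_empty] at hc
    omega
  obtain ⟨a, haU, hamin⟩ := exists_min_image _ id hU
  obtain ⟨haW, hca⟩ := mem_filter.1 haU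
  have hlose : pairSign W E a = -1 :=
    (pairSign_eq_one_or_eq_neg_one W E a).resolve_left fun ha =>
      absurd (hcmax a (mem_filter.2 ⟨haW, ha⟩)) (not_le.2 hca)
  exact ⟨a, haW, (hcmax r (mem_filter.2 ⟨hr, hwin⟩)).trans_lt hca,
    (card_filter_lt_of_consecutive haW hca (fun x hx hcx => hamin x (mem_filter.2 ⟨hx, hcx⟩))
      hc hlose).1⟩

namespace IsSymmetricDeal

lemma trace_sub_pairSign_le_trace_erase (hD : IsSymmetricDeal W E) (hr : r ∈ W) (he : e ∈ E)
    (h : ∀ w ∈ W, w < r → w < e) :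
    trace W E - pairSign W E r ≤ trace (W.erase r) (E.erase e) := by
  rw [hD.trace_eq_sum_pairSign, (hD.erase hr he).trace_eq_sum_pairSign,
    ← add_sum_erase W _ hr, add_sub_cancel_left]
  exact sum_le_sum fun w hw => pairSign_le_pairSign_erase hr he (h w (mem_of_mem_erase hw))

lemma trace_sub_pairSign_add_two_le_trace_erase {a : ℕ} (hD : IsSymmetricDeal W E) (hr : r ∈ W)
    (he : e ∈ E) (ha : a ∈ W) (hra : r < a) (hae : a < e)
    (hflip : #{x ∈ E | a < x} = #{x ∈ W | a < x} + 1) :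
    trace W E - pairSign W E r + 2 ≤ trace (W.erase r) (E.erase e) := by
  have ha' : a ∈ W.erase r := mem_erase.2 ⟨hra.ne', ha⟩
  rw [hD.trace_eq_sum_pairSign, (hD.erase hr he).trace_eq_sum_pairSign,
    ← add_sum_erase W _ hr, add_sub_cancel_left, ← add_sum_erase _ _ ha',
    ← add_sum_erase _ _ ha', add_right_comm]
  refine add_le_add (pairSign_add_two_le_pairSign_erase he hra.le hae hflip)
    (sum_le_sum fun w hw => pairSign_le_pairSign_erase hr he fun hwr => ?_)
  omega

lemma trace_add_one_le_trace_erase_min' (hD : IsSymmetricDeal W E) (he : e ∈ E)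
    (hW : W.Nonempty) (hall : ∀ x ∈ W, x < e) :
    trace W E + 1 ≤ trace (W.erase (W.min' hW)) (E.erase e) := by
  have hr := W.min'_mem hW
  rcases pairSign_eq_one_or_eq_neg_one W E (W.min' hW) with hr1 | hr1
  · obtain ⟨a, ha, hra, hflip⟩ := exists_flip_above hr hr1 he hall
    have := hD.trace_sub_pairSign_add_two_le_trace_erase hr he ha hra (hall a ha) hflip
    linarith
  · have := hD.trace_sub_pairSign_le_trace_erase hr he
      fun w hw hwr => absurd (W.min'_le w hw) (not_le.2 hwr)
    linarith

lemma exists_response (hD : IsSymmetricDeal W E) (he : e ∈ E) :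
    ∃ r ∈ W, ((∃ x ∈ W, e < x) → e < r) ∧
      (e < r → trace W E - 1 ≤ trace (W.erase r) (E.erase e)) ∧
      (r < e → trace W E + 1 ≤ trace (W.erase r) (E.erase e)) := by
  by_cases hbeat : ∃ x ∈ W, e < x
  · obtain ⟨x, hx, hex⟩ := hbeat
    obtain ⟨r, hrU, hrmin⟩ := exists_min_image {x ∈ W | e < x} id ⟨x, mem_filter.2 ⟨hx, hex⟩⟩
    obtain ⟨hr, her⟩ := mem_filter.1 hrU
    refine ⟨r, hr, fun _ => her, fun _ => ?_, fun hre => absurd her (not_lt.2 hre.le)⟩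
    have := hD.trace_sub_pairSign_le_trace_erase hr he fun w hw hwr =>
      lt_of_le_of_ne (not_lt.1 fun hew => not_le.2 hwr (hrmin w (mem_filter.2 ⟨hw, hew⟩)))
        (hD.ne hw he)
    rcases pairSign_eq_one_or_eq_neg_one W E r with h | h <;> linarith
  · push Not at hbeat
    have hall : ∀ x ∈ W, x < e := fun x hx => lt_of_le_of_ne (hbeat x hx) (hD.ne hx he)
    have hW : W.Nonempty := hD.nonempty_iff.2 ⟨e, he⟩
    exact ⟨W.min' hW, W.min'_mem hW, fun ⟨x, hx, hex⟩ => absurd (hbeat x hx) (not_le.2 hex),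
      fun h => absurd (hall _ (W.min'_mem hW)) (not_lt.2 h.le),
      fun _ => hD.trace_add_one_le_trace_erase_min' he hW hall⟩

lemma exists_response_strategy (hD : IsSymmetricDeal W E) :
    ∃ resp : ℕ → ℕ, ∀ e ∈ E, resp e ∈ W ∧ ((∃ x ∈ W, e < x) → e < resp e) ∧
      (e < resp e → trace W E - 1 ≤ trace (W.erase (resp e)) (E.erase e)) ∧
      (resp e < e → trace W E + 1 ≤ trace (W.erase (resp e)) (E.erase e)) := by
  classical
  refine ⟨fun e => if he : e ∈ E then (hD.exists_response he).choose else 0, fun e he => ?_⟩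
  simp only [dif_pos he]
  exact (hD.exists_response he).choose_spec

/-- The lead is the West card `c` just below the lowest losing card `a`: every East card above
`c` also lies above `a`, and removing one turns `a` into a winning card. -/
lemma exists_lead_of_pairSign_min'_eq_one (hD : IsSymmetricDeal W E) (hW : W.Nonempty)
    (hmin : pairSign W E (W.min' hW) = 1) (hlose : ∃ a ∈ W, pairSign W E a = -1) :
    ∃ c ∈ W, (∃ x ∈ E, c < x) ∧
      ∀ e ∈ E, c < e → trace W E + 1 ≤ trace (W.erase c) (E.erase e) := by
  obtain ⟨a, haL, hamin⟩ := exists_min_image {a ∈ W | pairSign W E a = -1} id <|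
    let ⟨a, ha, h⟩ := hlose; ⟨a, mem_filter.2 ⟨ha, h⟩⟩
  obtain ⟨haW, ha⟩ := mem_filter.1 haL
  have hB : {x ∈ W | x < a}.Nonempty := by
    refine ⟨W.min' hW, mem_filter.2 ⟨W.min'_mem hW, lt_of_le_of_ne (W.min'_le a haW) ?_⟩⟩
    rintro h
    rw [h, ha] at hmin
    exact absurd hmin (by decide)
  obtain ⟨c, hcB, hcmax⟩ := exists_max_image _ id hB
  obtain ⟨hcW, hca⟩ := mem_filter.1 hcB
  have hc : pairSign W E c = 1 :=
    (pairSign_eq_one_or_eq_neg_one W E c).resolve_right fun h =>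
      absurd (hamin c (mem_filter.2 ⟨hcW, h⟩)) (not_le.2 hca)
  obtain ⟨hflip, hEca⟩ := card_filter_lt_of_consecutive haW hca
    (fun x hx hcx => not_lt.1 fun hxa => absurd (hcmax x (mem_filter.2 ⟨hx, hxa⟩)) (not_le.2 hcx))
    hc ha
  refine ⟨c, hcW, ?_, fun e he hce => ?_⟩
  · obtain ⟨x, hx⟩ := card_pos.1 (by omega : 0 < #{x ∈ E | c < x})
    exact ⟨x, mem_filter.1 hx⟩
  · have hae : a < e := by
      by_contra! hea
      have hsub : {x ∈ E | a < x} ⊆ {x ∈ E | c < x} :=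
        monotone_filter_right E fun _ _ hx => hca.trans hx
      have := card_lt_card <| (ssubset_iff_of_subset hsub).2
        ⟨e, mem_filter.2 ⟨he, hce⟩, fun h => absurd (mem_filter.1 h).2 (not_lt.2 hea)⟩
      omega
    have := hD.trace_sub_pairSign_add_two_le_trace_erase hcW he haW hca hae hflip
    linarith

lemma exists_lead (hD : IsSymmetricDeal W E) (hW : W.Nonempty) (h0 : 0 ≤ trace W E) :
    ∃ w ∈ W, (∀ e ∈ E, w < e → 1 ≤ trace (W.erase w) (E.erase e)) ∧
      ((∀ x ∈ E, x < w) → ∀ e ∈ E, 0 ≤ trace (W.erase w) (E.erase e)) := by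
  have hr := W.min'_mem hW
  have hbase : ∀ e ∈ E, trace W E - pairSign W E (W.min' hW) ≤
      trace (W.erase (W.min' hW)) (E.erase e) := fun e he =>
    hD.trace_sub_pairSign_le_trace_erase hr he fun w hw hwr =>
      absurd (W.min'_le w hw) (not_le.2 hwr)
  by_cases hlose : ∃ a ∈ W, pairSign W E a = -1
  · rcases pairSign_eq_one_or_eq_neg_one W E (W.min' hW) with hr1 | hr1
    · obtain ⟨c, hc, ⟨x, hx, hcx⟩, h⟩ := hD.exists_lead_of_pairSign_min'_eq_one hW hr1 hlose
      exact ⟨c, hc, fun e he hce => by linarith [h e he hce],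
        fun hall => absurd (hall x hx) (not_lt.2 hcx.le)⟩
    · exact ⟨_, hr, fun e he _ => by linarith [hbase e he], fun _ e he => by linarith [hbase e he]⟩
  · push Not at hlose
    have hall : ∀ w ∈ W, pairSign W E w = 1 := fun w hw =>
      (pairSign_eq_one_or_eq_neg_one W E w).resolve_right (hlose w hw)
    have htr : trace W E = #W := by
      rw [hD.trace_eq_sum_pairSign, sum_congr rfl hall]; simp
    refine ⟨_, hr, fun e he hre => ?_, fun _ e he => ?_⟩
    · have h1 : 0 < #{x ∈ E | W.min' hW < x} := card_pos.2 ⟨e, mem_filter.2 ⟨he, hre⟩⟩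
      have h2 : #{x ∈ W | W.min' hW < x} < #W :=
        card_lt_card (filter_ssubset.2 ⟨_, hr, lt_irrefl _⟩)
      have h3 := pairSign_eq_one_iff.1 (hall _ hr)
      have h4 := hbase e he
      rw [hall _ hr, htr] at h4
      omega
    · have := card_pos.2 hW
      linarith [hbase e he, hall _ hr]

end IsSymmetricDeal

theorem westWins_of_trace_nonneg (hD : IsSymmetricDeal W E) :
    (0 ≤ trace W E → WestWins W E true) ∧ (0 < trace W E → WestWins W E false) := by
  induction W using Finset.strongInduction generalizing E with
  | H W ih =>
    have ih_erase : ∀ {r e}, r ∈ W → e ∈ E → _ := fun hr he =>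
      ih _ (erase_ssubset hr) (hD.erase hr he)
    refine ⟨fun h0 => ?_, fun h1 => ?_⟩
    · rcases W.eq_empty_or_nonempty with rfl | hW
      · rw [hD.eq_empty]; exact WestWins.last
      obtain ⟨w, hw, hbeat, hduck⟩ := hD.exists_lead hW h0
      refine WestWins.westLeads W E w hw fun e he hgreedy => ?_
      rcases lt_or_gt_of_ne (hD.ne hw he) with hwe | hew
      · rw [decide_eq_false (not_lt.2 hwe.le)]
        exact (ih_erase hw he).2 (hbeat e he hwe)
      · have hall : ∀ x ∈ E, x < w := fun x hx =>
          lt_of_le_of_ne (not_lt.1 fun hwx => absurd (hgreedy ⟨x, hx, hwx⟩) (not_lt.2 hew.le))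
            (hD.ne hw hx).symm
        rw [decide_eq_true hew]
        exact (ih_erase hw he).1 (hduck hall e he)
    · have hE : E.Nonempty := by
        rcases E.eq_empty_or_nonempty with rfl | hE
        · simp [hD.symm.eq_empty] at h1
        · exact hE
      obtain ⟨resp, hresp⟩ := hD.exists_response_strategy
      refine WestWins.eastLeads W E hE resp (fun e he => (hresp e he).1)
        (fun e he => (hresp e he).2.1) fun e he => ?_
      obtain ⟨hr, -, hbeat, hduck⟩ := hresp e he
      rcases lt_or_gt_of_ne (hD.ne hr he).symm with her | hre
      · rw [decide_eq_true her]
        exact (ih_erase hr he).1 (by linarith [hbeat her])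
      · rw [decide_eq_false (not_lt.2 hre.le)]
        exact (ih_erase hr he).2 (by linarith [hduck hre])

theorem not_westWins_of_trace_nonpos (hD : IsSymmetricDeal W E) :
    (trace W E ≤ 0 → ¬ WestWins W E false) ∧ (trace W E < 0 → ¬ WestWins W E true) := by
  induction W using Finset.strongInduction generalizing E with
  | H W ih =>
    have ih_erase : ∀ {r e}, r ∈ W → e ∈ E → _ := fun hr he =>
      ih _ (erase_ssubset hr) (hD.erase hr he)
    refine ⟨fun h0 hwin => ?_, fun h1 hwin => ?_⟩
    · cases hwin with
      | eastLeads _ _ hE resp hmem hgreedy hnext =>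
        obtain ⟨e, he, hbeat, hduck⟩ := hD.symm.exists_lead hE (by linarith [hD.trace_swap])
        have hr := hmem e he
        have hswap := (hD.erase hr he).trace_swap
        have hnext := hnext e he
        rcases lt_or_gt_of_ne (hD.ne hr he).symm with her | hre
        · rw [decide_eq_true her] at hnext
          exact (ih_erase hr he).2 (by linarith [hbeat _ hr her]) hnext
        · rw [decide_eq_false (not_lt.2 hre.le)] at hnext
          have hall : ∀ x ∈ W, x < e := fun x hx =>
            lt_of_le_of_ne (not_lt.1 fun hex => absurd (hgreedy e he ⟨x, hx, hex⟩)
              (not_lt.2 hre.le)) (hD.ne hx he)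
          exact (ih_erase hr he).1 (by linarith [hduck hall _ hr]) hnext
    · cases hwin with
      | last => simp at h1
      | westLeads _ _ w hw hnext =>
        obtain ⟨resp, hresp⟩ := hD.symm.exists_response_strategy
        obtain ⟨he, hgreedy, hbeat, hduck⟩ := hresp w hw
        have hswap := (hD.erase hw he).trace_swap
        have hnext := hnext _ he hgreedy
        rcases lt_or_gt_of_ne (hD.ne hw he) with hwe | hew
        · rw [decide_eq_false (not_lt.2 hwe.le)] at hnext
          exact (ih_erase hw he).1 (by linarith [hbeat hwe, hD.trace_swap]) hnext
        · rw [decide_eq_true hew] at hnext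
          exact (ih_erase hw he).2 (by linarith [hduck hew, hD.trace_swap]) hnext

end FiveCard

/-- Solution of single-suit five-card: for a symmetric deal (disjoint hands of
equal size), West wins if the trace is positive (whoever is on lead), East
wins if it is negative, and the player on lead wins if the trace is zero. -/
theorem stmt16 (W E : Finset ℕ) (hdisj : Disjoint W E) (hcard : W.card = E.card) :
    (0 < trace W E → WestWins W E true ∧ WestWins W E false) ∧
    (trace W E < 0 → ¬ WestWins W E true ∧ ¬ WestWins W E false) ∧
    (trace W E = 0 → WestWins W E true ∧ ¬ WestWins W E false) := by
  have hD : FiveCard.IsSymmetricDeal W E := ⟨hdisj, hcard⟩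
  obtain ⟨hwin_lead, hwin_follow⟩ := FiveCard.westWins_of_trace_nonneg hD
  obtain ⟨hlose_follow, hlose_lead⟩ := FiveCard.not_westWins_of_trace_nonpos hD
  exact ⟨fun h => ⟨hwin_lead h.le, hwin_follow h⟩, fun h => ⟨hlose_lead h, hlose_follow h.le⟩,
    fun h => ⟨hwin_lead h.ge, hlose_follow h.le⟩⟩
end
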